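/- Beta reduction in a pure type system satisfies preservation: if \Gamma \vdash a : A and a \leadsto b, then \Gamma \vdash b : A. -/

import Mathlib

/-- Expressions of a pure type system: sorts, de Bruijn variables,
dependent products, annotated abstractions, applications. -/
inductive Expr : Type
  | sort : Nat → Expr
  | var : Nat → Expr
  | pi : Expr → Expr → Expr
  | lam : Expr → Expr → Expr
  | app : Expr → Expr → Expr
  deriving DecidableEq

/-- Lift free de Bruijn variables `≥ k` by `d`. -/
def Expr.lift (d k : Nat) : Expr → Expr
  | .sort s => .sort s
  | .var n => if n < k then .var n else .var (n + d)
  | .pi A B => .pi (Expr.lift d k A) (Expr.lift d (k+1) B)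
  | .lam A b => .lam (Expr.lift d k A) (Expr.lift d (k+1) b)
  | .app a b => .app (Expr.lift d k a) (Expr.lift d k b)

/-- Capture-avoiding substitution of `e` for variable `k`. -/
def Expr.subst (e : Expr) (k : Nat) : Expr → Expr
  | .sort s => .sort s
  | .var n => if n < k then .var n else if n = k then Expr.lift k 0 e else .var (n - 1)
  | .pi A B => .pi (Expr.subst e k A) (Expr.subst e (k+1) B)
  | .lam A b => .lam (Expr.subst e k A) (Expr.subst e (k+1) b)
  | .app a b => .app (Expr.subst e k a) (Expr.subst e k b)

/-- One-step beta reduction, with full congruence rules. -/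
inductive Step : Expr → Expr → Prop
  | beta (A b a : Expr) : Step (.app (.lam A b) a) (Expr.subst a 0 b)
  | pi1 {A A' B} : Step A A' → Step (.pi A B) (.pi A' B)
  | pi2 {A B B'} : Step B B' → Step (.pi A B) (.pi A B')
  | lam1 {A A' b} : Step A A' → Step (.lam A b) (.lam A' b)
  | lam2 {A b b'} : Step b b' → Step (.lam A b) (.lam A b')
  | app1 {a a' b} : Step a a' → Step (.app a b) (.app a' b)
  | app2 {a b b'} : Step b b' → Step (.app a b) (.app a b')

/-- Multi-step reduction. -/
def Steps : Expr → Expr → Prop := Relation.ReflTransGen Step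

/-- Strong normalization: no infinite reduction sequences from `a`. -/
def SN (a : Expr) : Prop := Acc (fun x y => Step y x) a

/-- Base expressions: a variable applied to a list of arguments. -/
inductive Base : Expr → Prop
  | var (n : Nat) : Base (.var n)
  | app {a} (b : Expr) : Base a → Base (.app a b)

/-- Key-redex contraction: `KeyRed a b` means `a` has a key redex and
contracting it yields `b` (i.e. `b = red_k a`). -/
inductive KeyRed : Expr → Expr → Prop
  | beta (A b a : Expr) : KeyRed (.app (.lam A b) a) (Expr.subst a 0 b)
  | app {a a'} (b : Expr) : KeyRed a a' → KeyRed (.app a b) (.app a' b)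

/-- `a` has a key redex. -/
def HasKey (a : Expr) : Prop := ∃ b, KeyRed a b

/-- Saturated sets of expressions. -/
def Saturated (S : Set Expr) : Prop :=
  (∀ a ∈ S, SN a) ∧
  (∀ a, Base a → SN a → a ∈ S) ∧
  (∀ a b, SN a → KeyRed a b → b ∈ S → a ∈ S)

/-- Function space on sets of expressions. -/
def Arrow (S₁ S₂ : Set Expr) : Set Expr := {a | ∀ b ∈ S₁, Expr.app a b ∈ S₂}

/-- Beta-conversion: the equivalence closure of one-step reduction. -/
def Conv : Expr → Expr → Prop := Relation.EqvGen Step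

/-- Specification of a pure type system: sorts, axioms and rules. -/
structure PTSSpec where
  sorts : Set Nat
  ax : Set (Nat × Nat)
  rules : Set (Nat × Nat × Nat)

/-- Typing contexts: de Bruijn lists, the head is the most recent binding. -/
abbrev Ctx := List Expr

mutual
/-- PTS typing judgement `Γ ⊢ a : A`. -/
inductive Typing (P : PTSSpec) : Ctx → Expr → Expr → Prop
  | sort {Γ s₁ s₂} : Wf P Γ → (s₁, s₂) ∈ P.ax →
      Typing P Γ (.sort s₁) (.sort s₂)
  | var {Γ n A} : Wf P Γ → Γ[n]? = some A →
      Typing P Γ (.var n) (Expr.lift (n+1) 0 A)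
  | pi {Γ A B s₁ s₂ s₃} : Typing P Γ A (.sort s₁) →
      Typing P (A :: Γ) B (.sort s₂) → (s₁, s₂, s₃) ∈ P.rules →
      Typing P Γ (.pi A B) (.sort s₃)
  | lam {Γ A B b s} : Typing P Γ (.pi A B) (.sort s) →
      Typing P (A :: Γ) b B →
      Typing P Γ (.lam A b) (.pi A B)
  | app {Γ a b A B} : Typing P Γ a (.pi A B) → Typing P Γ b A →
      Typing P Γ (.app a b) (Expr.subst b 0 B)
  | conv {Γ a A B s} : Typing P Γ a A → Typing P Γ B (.sort s) →
      Conv A B → Typing P Γ a B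

/-- Well-formed contexts. -/
inductive Wf (P : PTSSpec) : Ctx → Prop
  | nil : Wf P []
  | cons {Γ A s} : Typing P Γ A (.sort s) → Wf P (A :: Γ)
end

/-- The Calculus of Constructions: `∗` is sort 0, `□` is sort 1. -/
def CC : PTSSpec :=
  { sorts := {0, 1}
    ax := {(0, 1)}
    rules := {(0, 0, 0), (1, 0, 0), (1, 1, 1), (0, 1, 1)} }

/-!
Preservation is proved by induction on the typing derivation. The congruence cases need
context conversion, itself a consequence of weakening and substitution; the β-case needs the
typing of the redex's parts, obtained by inverting the λ-typing up to conversion, and hence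
injectivity of `Π` under conversion. That injectivity comes from the Church–Rosser theorem,
proved with parallel reduction and Takahashi's complete development.
-/
namespace Expr

theorem lift_zero (k : Nat) (t : Expr) : lift 0 k t = t := by
  induction t generalizing k <;> grind [lift]

theorem lift_lift_add {m n i k : Nat} (hik : i ≤ k) (hk : k ≤ i + m) (t : Expr) :
    lift n k (lift m i t) = lift (m + n) i t := by
  induction t generalizing i k <;> grind [lift]

theorem lift_lift_comm {m n k i : Nat} (hki : k ≤ i) (t : Expr) :
    lift n k (lift m i t) = lift m (i + n) (lift n k t) := by
  induction t generalizing k i <;> grind [lift]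

theorem lift_subst_of_le {n k p : Nat} (hkp : k ≤ p) (N t : Expr) :
    lift n k (subst N p t) = subst N (n + p) (lift n k t) := by
  induction t generalizing k p <;> grind [lift, subst, lift_lift_add]

theorem subst_lift_succ {n k p : Nat} (hkp : k ≤ p) (hp : p ≤ n + k) (N t : Expr) :
    subst N p (lift (n + 1) k t) = lift n k t := by
  induction t generalizing k p <;> grind [lift, subst]

theorem lift_subst_distrib (n k p : Nat) (N t : Expr) :
    lift n (p + k) (subst N p t) = subst (lift n k N) p (lift n (p + k + 1) t) := by
  induction t generalizing p <;> grind [lift, subst, lift_lift_comm]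

theorem subst_subst_distrib (k p : Nat) (P N t : Expr) :
    subst P (p + k) (subst N p t) = subst (subst P k N) p (subst P (p + k + 1) t) := by
  induction t generalizing p <;> grind [lift, subst, lift_subst_of_le, subst_lift_succ]

theorem lift_subst_zero (n k : Nat) (N t : Expr) :
    lift n k (subst N 0 t) = subst (lift n k N) 0 (lift n (k + 1) t) := by
  simpa using lift_subst_distrib n k 0 N t

theorem subst_subst_zero (k : Nat) (P N t : Expr) :
    subst P k (subst N 0 t) = subst (subst P k N) 0 (subst P (k + 1) t) := by
  simpa using subst_subst_distrib k 0 P N t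

theorem subst_var_zero_lift_one (k : Nat) (t : Expr) :
    subst (.var 0) k (lift 1 (k + 1) t) = t := by
  induction t generalizing k <;> grind [lift, subst]

end Expr

/-- Parallel reduction: contracts any set of redexes already present in a term at once. -/
inductive Par : Expr → Expr → Prop
  | sort (s : Nat) : Par (.sort s) (.sort s)
  | var (n : Nat) : Par (.var n) (.var n)
  | pi {A A' B B'} : Par A A' → Par B B' → Par (.pi A B) (.pi A' B')
  | lam {A A' b b'} : Par A A' → Par b b' → Par (.lam A b) (.lam A' b')
  | app {a a' b b'} : Par a a' → Par b b' → Par (.app a b) (.app a' b')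
  | beta {A b b' a a'} : Par b b' → Par a a' → Par (.app (.lam A b) a) (.subst a' 0 b')

namespace Steps

theorem map {f : Expr → Expr} (hf : ∀ {a b}, Step a b → Step (f a) (f b)) {a b : Expr}
    (h : Steps a b) : Steps (f a) (f b) :=
  Relation.ReflTransGen.lift f (fun _ _ => hf) _ _ h

theorem pi {A A' B B' : Expr} (hA : Steps A A') (hB : Steps B B') :
    Steps (.pi A B) (.pi A' B') :=
  Relation.ReflTransGen.trans (map (f := (Expr.pi · B)) .pi1 hA) (map .pi2 hB)

theorem lam {A A' b b' : Expr} (hA : Steps A A') (hb : Steps b b') :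
    Steps (.lam A b) (.lam A' b') :=
  Relation.ReflTransGen.trans (map (f := (Expr.lam · b)) .lam1 hA) (map .lam2 hb)

theorem app {a a' b b' : Expr} (ha : Steps a a') (hb : Steps b b') :
    Steps (.app a b) (.app a' b') :=
  Relation.ReflTransGen.trans (map (f := (Expr.app · b)) .app1 ha) (map .app2 hb)

theorem pi_inv {A B x : Expr} (h : Steps (.pi A B) x) :
    ∃ A' B', x = .pi A' B' ∧ Steps A A' ∧ Steps B B' := by
  induction h with
  | refl => exact ⟨A, B, rfl, .refl, .refl⟩
  | tail _ hstep ih =>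
    obtain ⟨A', B', rfl, hA, hB⟩ := ih
    cases hstep with
    | pi1 h => exact ⟨_, B', rfl, hA.tail h, hB⟩
    | pi2 h => exact ⟨A', _, rfl, hA, hB.tail h⟩

end Steps

namespace Par

theorem refl (t : Expr) : Par t t := by
  induction t <;> constructor <;> assumption

theorem of_step {a b : Expr} (h : Step a b) : Par a b := by
  induction h with
  | beta A b a => exact .beta (.refl b) (.refl a)
  | pi1 _ ih => exact .pi ih (.refl _)
  | pi2 _ ih => exact .pi (.refl _) ih
  | lam1 _ ih => exact .lam ih (.refl _)
  | lam2 _ ih => exact .lam (.refl _) ih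
  | app1 _ ih => exact .app ih (.refl _)
  | app2 _ ih => exact .app (.refl _) ih

theorem to_steps {a b : Expr} (h : Par a b) : Steps a b := by
  induction h with
  | sort | var => exact Relation.ReflTransGen.refl
  | pi _ _ ihA ihB => exact ihA.pi ihB
  | lam _ _ ihA ihb => exact ihA.lam ihb
  | app _ _ iha ihb => exact iha.app ihb
  | beta _ _ ihb iha =>
    exact ((Steps.lam Relation.ReflTransGen.refl ihb).app iha).tail (.beta _ _ _)

theorem lift {a b : Expr} (h : Par a b) (d k : Nat) : Par (a.lift d k) (b.lift d k) := by
  induction h generalizing k with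
  | sort | var => exact .refl _
  | pi _ _ ihA ihB => exact .pi (ihA k) (ihB (k + 1))
  | lam _ _ ihA ihb => exact .lam (ihA k) (ihb (k + 1))
  | app _ _ iha ihb => exact .app (iha k) (ihb k)
  | beta _ _ ihb iha =>
    rw [Expr.lift, Expr.lift_subst_zero]
    exact .beta (ihb (k + 1)) (iha k)

theorem subst {a a' e e' : Expr} (ha : Par a a') (he : Par e e') (k : Nat) :
    Par (Expr.subst e k a) (Expr.subst e' k a') := by
  induction ha generalizing k with
  | sort => exact .refl _
  | var n =>
    simp only [Expr.subst]
    split_ifs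
    · exact .refl _
    · exact he.lift k 0
    · exact .refl _
  | pi _ _ ihA ihB => exact .pi (ihA k) (ihB (k + 1))
  | lam _ _ ihA ihb => exact .lam (ihA k) (ihb (k + 1))
  | app _ _ iha ihb => exact .app (iha k) (ihb k)
  | beta _ _ ihb iha =>
    rw [Expr.subst, Expr.subst, Expr.subst_subst_zero]
    exact .beta (ihb (k + 1)) (iha k)

end Par

/-- Complete development: contracts every redex present in the term. -/
def Expr.cd : Expr → Expr
  | .sort s => .sort s
  | .var n => .var n
  | .pi A B => .pi A.cd B.cd
  | .lam A b => .lam A.cd b.cd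
  | .app (.lam _ b) a => Expr.subst a.cd 0 b.cd
  | .app a b => .app a.cd b.cd

theorem Par.triangle {t u : Expr} (h : Par t u) : Par u t.cd := by
  induction h with
  | sort | var => exact .refl _
  | pi _ _ ihA ihB => exact .pi ihA ihB
  | lam _ _ ihA ihb => exact .lam ihA ihb
  | app ha _ iha ihb =>
    cases ha with
    | lam _ _ => cases iha with | lam _ ihc => exact .beta ihc ihb
    | _ => exact .app iha ihb
  | beta _ _ ihb iha => exact ihb.subst iha 0

theorem reflTransGen_par : Relation.ReflTransGen Par = Steps :=
  funext₂ fun _ _ => propext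
    ⟨Relation.reflTransGen_closed (fun _ _ => Par.to_steps) _ _,
     Relation.ReflTransGen.mono (fun _ _ => Par.of_step) _ _⟩

namespace Conv

theorem of_step {a b : Expr} (h : Step a b) : Conv a b := .rel _ _ h

theorem of_steps {a b : Expr} (h : Steps a b) : Conv a b :=
  Relation.EqvGen.reflTransGen_le_eqvGen (r := Step) _ _ h

theorem symm {a b : Expr} (h : Conv a b) : Conv b a := Relation.EqvGen.symm _ _ h

theorem trans {a b c : Expr} (hab : Conv a b) (hbc : Conv b c) : Conv a c :=
  Relation.EqvGen.trans _ _ _ hab hbc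

/-- Church–Rosser: the diamond property of `Par`, witnessed by `Expr.cd`, makes joinability
under `Steps` an equivalence containing `Step`. -/
theorem join {a b : Expr} (h : Conv a b) : Relation.Join Steps a b := by
  have hequiv : Equivalence (Relation.Join Steps) := reflTransGen_par ▸
    Relation.equivalence_join_reflTransGen fun t _ _ hu hv =>
      ⟨t.cd, .single hu.triangle, .single hv.triangle⟩
  exact hequiv.eqvGen_iff.mp <|
    Relation.EqvGen.mono (fun _ b hs => ⟨b, .single hs, .refl⟩) _ _ h

theorem map {f : Expr → Expr} (hf : ∀ {a b}, Step a b → Conv (f a) (f b)) {a b : Expr}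
    (h : Conv a b) : Conv (f a) (f b) := by
  induction h with
  | rel _ _ hs => exact hf hs
  | refl => exact .refl _
  | symm _ _ _ ih => exact ih.symm
  | trans _ _ _ _ _ ih₁ ih₂ => exact ih₁.trans ih₂

theorem lift {a b : Expr} (h : Conv a b) (d k : Nat) : Conv (a.lift d k) (b.lift d k) :=
  map (fun hs => of_steps ((Par.of_step hs).lift d k).to_steps) h

theorem subst {a b : Expr} (h : Conv a b) (e : Expr) (k : Nat) :
    Conv (Expr.subst e k a) (Expr.subst e k b) :=
  map (fun hs => of_steps ((Par.of_step hs).subst (.refl e) k).to_steps) h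

theorem pi_inj {A B A' B' : Expr} (h : Conv (.pi A B) (.pi A' B')) : Conv A A' ∧ Conv B B' := by
  obtain ⟨_, h₁, h₂⟩ := h.join
  obtain ⟨_, _, rfl, hA, hB⟩ := h₁.pi_inv
  obtain ⟨_, _, he, hA', hB'⟩ := h₂.pi_inv
  cases he
  exact ⟨(of_steps hA).trans (of_steps hA').symm, (of_steps hB).trans (of_steps hB').symm⟩

end Conv

namespace Typing

variable {P : PTSSpec}

theorem wf {Γ : Ctx} {t T : Expr} (h : Typing P Γ t T) : Wf P Γ := by
  induction h using Typing.rec (motive_2 := fun _ _ => True) with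
  | sort hw | var hw | pi _ _ _ hw | lam _ _ hw | app _ _ hw | conv _ _ _ hw => exact hw
  | nil | cons => trivial

theorem pi_inv {Γ : Ctx} {A B T : Expr} (h : Typing P Γ (.pi A B) T) :
    ∃ s₁ s₂ s₃, Typing P Γ A (.sort s₁) ∧ Typing P (A :: Γ) B (.sort s₂) ∧
      (s₁, s₂, s₃) ∈ P.rules ∧ Conv (.sort s₃) T := by
  generalize he : Expr.pi A B = t at h
  induction h using Typing.rec (motive_2 := fun _ _ => True) with
  | pi hA hB hr => cases he; exact ⟨_, _, _, hA, hB, hr, .refl _⟩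
  | conv _ _ hc ih =>
    obtain ⟨s₁, s₂, s₃, hA, hB, hr, hc'⟩ := ih he
    exact ⟨s₁, s₂, s₃, hA, hB, hr, hc'.trans hc⟩
  | nil | cons => trivial
  | _ => cases he

theorem lam_inv {Γ : Ctx} {A b T : Expr} (h : Typing P Γ (.lam A b) T) :
    ∃ B s, Typing P Γ (.pi A B) (.sort s) ∧ Typing P (A :: Γ) b B ∧ Conv (.pi A B) T := by
  generalize he : Expr.lam A b = t at h
  induction h using Typing.rec (motive_2 := fun _ _ => True) with
  | lam hpi hb => cases he; exact ⟨_, _, hpi, hb, .refl _⟩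
  | conv _ _ hc ih =>
    obtain ⟨B, s, hpi, hb, hc'⟩ := ih he
    exact ⟨B, s, hpi, hb, hc'.trans hc⟩
  | nil | cons => trivial
  | _ => cases he

end Typing

/-- `CtxInsert W k Γ Γ'`: `Γ'` is `Γ` with `W` inserted at de Bruijn position `k`, the bindings
above it lifted accordingly. -/
inductive CtxInsert (W : Expr) : Nat → Ctx → Ctx → Prop
  | zero (Γ : Ctx) : CtxInsert W 0 Γ (W :: Γ)
  | succ {k Γ Γ'} (A : Expr) : CtxInsert W k Γ Γ' →
      CtxInsert W (k + 1) (A :: Γ) (A.lift 1 k :: Γ')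

namespace CtxInsert

variable {W : Expr} {k : Nat} {Γ Γ' : Ctx}

theorem getElem?_of_lt (h : CtxInsert W k Γ Γ') {n : Nat} {A : Expr} (hn : n < k)
    (hA : Γ[n]? = some A) : Γ'[n]? = some (A.lift 1 (k - 1 - n)) := by
  induction h generalizing n with
  | zero => omega
  | succ _ _ ih =>
    cases n with
    | zero => cases hA; rfl
    | succ n =>
      rw [List.getElem?_cons_succ, ih (by omega) hA]
      congr 2
      omega

theorem getElem?_of_le (h : CtxInsert W k Γ Γ') {n : Nat} (hn : k ≤ n) :
    Γ'[n + 1]? = Γ[n]? := by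
  induction h generalizing n with
  | zero => rfl
  | succ _ _ ih =>
    cases n with
    | zero => omega
    | succ n => exact ih (by omega)

end CtxInsert

namespace Typing

variable {P : PTSSpec}

theorem weakening {Γ : Ctx} {t T : Expr} (h : Typing P Γ t T) {W : Expr} {k : Nat} {Γ' : Ctx}
    (hins : CtxInsert W k Γ Γ') (hw : Wf P Γ') : Typing P Γ' (t.lift 1 k) (T.lift 1 k) := by
  induction h using Typing.rec (motive_2 := fun _ _ => True) generalizing k Γ' with
  | sort _ hax => exact .sort hw hax
  | @var Γ n A _ hA =>
    rcases Nat.lt_or_ge n k with hn | hn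
    · have hlift : (A.lift (n + 1) 0).lift 1 k = (A.lift 1 (k - 1 - n)).lift (n + 1) 0 := by
        rw [Expr.lift_lift_comm (Nat.zero_le _)]
        congr 1
        omega
      rw [hlift]
      simpa [Expr.lift, hn] using Typing.var hw (hins.getElem?_of_lt hn hA)
    · rw [Expr.lift_lift_add (Nat.zero_le k) (by omega)]
      simpa [Expr.lift, show ¬n < k by omega] using
        Typing.var hw ((hins.getElem?_of_le hn).trans hA)
  | pi _ _ hr ihA ihB =>
    have hA := ihA hins hw
    exact .pi hA (ihB (.succ _ hins) (.cons hA)) hr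
  | lam _ _ ihpi ihb =>
    have hpi := ihpi hins hw
    obtain ⟨_, _, _, hA, -⟩ := hpi.pi_inv
    exact .lam hpi (ihb (.succ _ hins) (.cons hA))
  | app _ _ ihf iha =>
    rw [Expr.lift, Expr.lift_subst_zero]
    exact .app (ihf hins hw) (iha hins hw)
  | conv _ _ hc iha ihB => exact .conv (iha hins hw) (ihB hins hw) (hc.lift 1 k)
  | nil | cons => trivial

theorem weaken_cons {Γ : Ctx} {t T A : Expr} {s : Nat} (h : Typing P Γ t T)
    (hA : Typing P Γ A (.sort s)) : Typing P (A :: Γ) (t.lift 1 0) (T.lift 1 0) :=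
  h.weakening (.zero Γ) (.cons hA)

end Typing

theorem Wf.typing_of_getElem? {P : PTSSpec} {Γ : Ctx} (hw : Wf P Γ) {n : Nat} {A : Expr}
    (hA : Γ[n]? = some A) : ∃ s, Typing P Γ (A.lift (n + 1) 0) (.sort s) := by
  induction n generalizing Γ with
  | zero =>
    obtain _ | ⟨hA₀⟩ := hw
    · cases hA
    · cases hA
      exact ⟨_, hA₀.weaken_cons hA₀⟩
  | succ n ih =>
    obtain _ | ⟨hA₀⟩ := hw
    · cases hA
    · obtain ⟨s, hs⟩ := ih hA₀.wf hA
      have := hs.weaken_cons hA₀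
      rw [Expr.lift_lift_add le_rfl (by omega)] at this
      exact ⟨s, this⟩

/-- `CtxSubst P N W k Γ Γ'`: `Γ` has `W` at de Bruijn position `k` and `N : W` in the part
of `Γ` older than it; `Γ'` is `Γ` with that binding removed and `N` substituted into the newer
ones. -/
inductive CtxSubst (P : PTSSpec) (N W : Expr) : Nat → Ctx → Ctx → Prop
  | zero {Γ : Ctx} : Typing P Γ N W → CtxSubst P N W 0 (W :: Γ) Γ
  | succ {k Γ Γ'} (A : Expr) : CtxSubst P N W k Γ Γ' →
      CtxSubst P N W (k + 1) (A :: Γ) (Expr.subst N k A :: Γ')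

namespace CtxSubst

variable {P : PTSSpec} {N W : Expr} {k : Nat} {Γ Γ' : Ctx}

theorem getElem?_of_lt (h : CtxSubst P N W k Γ Γ') {n : Nat} {A : Expr} (hn : n < k)
    (hA : Γ[n]? = some A) : Γ'[n]? = some (Expr.subst N (k - 1 - n) A) := by
  induction h generalizing n with
  | zero => omega
  | succ _ _ ih =>
    cases n with
    | zero => cases hA; rfl
    | succ n =>
      rw [List.getElem?_cons_succ, ih (by omega) hA]
      congr 2
      omega

theorem getElem?_self (h : CtxSubst P N W k Γ Γ') : Γ[k]? = some W := by
  induction h with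
  | zero => rfl
  | succ _ _ ih => exact ih

theorem getElem?_sub_one_of_lt (h : CtxSubst P N W k Γ Γ') {n : Nat} (hn : k < n) :
    Γ'[n - 1]? = Γ[n]? := by
  induction h generalizing n with
  | zero =>
    obtain _ | n := n
    · omega
    · rfl
  | succ _ _ ih =>
    obtain _ | _ | n := n
    · omega
    · omega
    · exact ih (n := n + 1) (by omega)

theorem typing_lift (h : CtxSubst P N W k Γ Γ') (hw : Wf P Γ') :
    Typing P Γ' (N.lift k 0) (W.lift k 0) := by
  induction h with
  | zero hN => rwa [Expr.lift_zero, Expr.lift_zero]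
  | @succ k _ _ _ _ ih =>
    obtain _ | ⟨hA⟩ := hw
    have := (ih hA.wf).weaken_cons hA
    rwa [Expr.lift_lift_add le_rfl (by omega), Expr.lift_lift_add le_rfl (by omega)] at this

end CtxSubst

namespace Typing

variable {P : PTSSpec}

theorem substitution {Γ : Ctx} {t T : Expr} (h : Typing P Γ t T) {N W : Expr} {k : Nat}
    {Γ' : Ctx} (hsub : CtxSubst P N W k Γ Γ') (hw : Wf P Γ') :
    Typing P Γ' (Expr.subst N k t) (Expr.subst N k T) := by
  induction h using Typing.rec (motive_2 := fun _ _ => True) generalizing k Γ' with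
  | sort _ hax => exact .sort hw hax
  | @var Γ n A _ hA =>
    rcases Nat.lt_trichotomy n k with hn | rfl | hn
    · have hsubst : Expr.subst N k (A.lift (n + 1) 0)
          = (Expr.subst N (k - 1 - n) A).lift (n + 1) 0 := by
        rw [Expr.lift_subst_of_le (Nat.zero_le _)]
        congr 1
        omega
      rw [hsubst]
      simpa [Expr.subst, hn] using Typing.var hw (hsub.getElem?_of_lt hn hA)
    · obtain rfl : A = W := Option.some.inj (hA.symm.trans hsub.getElem?_self)
      rw [Expr.subst_lift_succ (Nat.zero_le n) (by omega)]
      simpa [Expr.subst] using hsub.typing_lift hw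
    · rw [Expr.subst_lift_succ (Nat.zero_le k) (by omega)]
      have := Typing.var hw ((hsub.getElem?_sub_one_of_lt hn).trans hA)
      rw [Nat.sub_add_cancel (by omega)] at this
      simpa [Expr.subst, show ¬n < k by omega, show n ≠ k by omega] using this
  | pi _ _ hr ihA ihB =>
    have hA := ihA hsub hw
    exact .pi hA (ihB (.succ _ hsub) (.cons hA)) hr
  | lam _ _ ihpi ihb =>
    have hpi := ihpi hsub hw
    obtain ⟨_, _, _, hA, -⟩ := hpi.pi_inv
    exact .lam hpi (ihb (.succ _ hsub) (.cons hA))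
  | app _ _ ihf iha =>
    rw [Expr.subst, Expr.subst_subst_zero]
    exact .app (ihf hsub hw) (iha hsub hw)
  | conv _ _ hc iha ihB => exact .conv (iha hsub hw) (ihB hsub hw) (hc.subst N k)
  | nil | cons => trivial

theorem conv_ctx {Γ : Ctx} {A A' t T : Expr} {s s' : Nat} (h : Typing P (A :: Γ) t T)
    (hc : Conv A A') (hA : Typing P Γ A (.sort s)) (hA' : Typing P Γ A' (.sort s')) :
    Typing P (A' :: Γ) t T := by
  -- substitute `#0 : A` (typed in `A' :: Γ` by conversion) into `h` weakened past `A'`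
  have hwA' : Wf P (A' :: Γ) := .cons hA'
  have hAlift := hA.weaken_cons hA'
  have hvar : Typing P (A' :: Γ) (.var 0) (A.lift 1 0) :=
    .conv (.var hwA' rfl) hAlift (hc.symm.lift 1 0)
  have hweak := h.weakening (.succ A (.zero Γ)) (.cons hAlift)
  simpa only [Expr.subst_var_zero_lift_one] using hweak.substitution (.zero hvar) hwA'

theorem type_correct {Γ : Ctx} {t T : Expr} (h : Typing P Γ t T) :
    (∃ s, T = .sort s) ∨ ∃ s, Typing P Γ T (.sort s) := by
  induction h using Typing.rec (motive_2 := fun _ _ => True) with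
  | sort | pi => exact .inl ⟨_, rfl⟩
  | var hw hA => exact .inr (hw.typing_of_getElem? hA)
  | lam hpi => exact .inr ⟨_, hpi⟩
  | app hf ha ihf =>
    obtain ⟨_, he⟩ | ⟨_, hpi⟩ := ihf
    · cases he
    · obtain ⟨_, _, _, -, hB, -⟩ := hpi.pi_inv
      exact .inr ⟨_, hB.substitution (.zero ha) hf.wf⟩
  | conv _ hB => exact .inr ⟨_, hB⟩
  | nil | cons => trivial

theorem subst_codomain {Γ : Ctx} {f a A B : Expr} (hf : Typing P Γ f (.pi A B))
    (ha : Typing P Γ a A) : ∃ s, Typing P Γ (Expr.subst a 0 B) (.sort s) := by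
  obtain ⟨_, he⟩ | ⟨_, hpi⟩ := hf.type_correct
  · cases he
  · obtain ⟨_, _, _, -, hB, -⟩ := hpi.pi_inv
    exact ⟨_, hB.substitution (.zero ha) hf.wf⟩

theorem beta {Γ : Ctx} {A₀ b a A B : Expr} (hlam : Typing P Γ (.lam A₀ b) (.pi A B))
    (ha : Typing P Γ a A) : Typing P Γ (Expr.subst a 0 b) (Expr.subst a 0 B) := by
  obtain ⟨_, _, hpi₀, hb, hc⟩ := hlam.lam_inv
  obtain ⟨hcA, hcB⟩ := hc.pi_inj
  obtain ⟨_, _, _, hA₀, -⟩ := hpi₀.pi_inv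
  obtain ⟨_, hB⟩ := hlam.subst_codomain ha
  exact .conv (hb.substitution (.zero (.conv ha hA₀ hcA.symm)) hlam.wf) hB (hcB.subst a 0)

end Typing

/-- Preservation for an arbitrary pure type system. -/
theorem preservation (P : PTSSpec) {Γ : Ctx} {a b A : Expr}
    (ht : Typing P Γ a A) (hs : Step a b) : Typing P Γ b A := by
  induction ht using Typing.rec (motive_2 := fun _ _ => True) generalizing b with
  | sort | var => cases hs
  | pi hA hB hr ihA ihB =>
    cases hs with
    | pi1 hs => exact .pi (ihA hs) (hB.conv_ctx (.of_step hs) hA (ihA hs)) hr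
    | pi2 hs => exact .pi hA (ihB hs) hr
  | lam hpi hb ihpi ihb =>
    cases hs with
    | lam1 hs =>
      have hpi' := ihpi (.pi1 hs)
      obtain ⟨_, _, _, hA, -⟩ := hpi.pi_inv
      obtain ⟨_, _, _, hA', -⟩ := hpi'.pi_inv
      exact .conv (.lam hpi' (hb.conv_ctx (.of_step hs) hA hA')) hpi (.symm (.of_step (.pi1 hs)))
    | lam2 hs => exact .lam hpi (ihb hs)
  | app hf ha ihf iha =>
    cases hs with
    | beta => exact hf.beta ha
    | app1 hs => exact .app (ihf hs) ha
    | app2 hs =>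
      obtain ⟨_, hB⟩ := hf.subst_codomain ha
      refine .conv (.app hf (iha hs)) hB (.symm (.of_steps ?_))
      exact ((Par.refl _).subst (.of_step hs) 0).to_steps
  | conv _ hB hc iha => exact .conv (iha hs) hB hc
  | nil | cons => trivial
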